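/- Let x_1 ≠ x_2 ∈ ℝ^d and n = 2. The mode-collapse point Ȳ = (x_1, x_1) is a sub-optimal strict local minimum of Y ↦ φ_JS(Y, X): there is ε > 0 such that φ_JS(Y, X) > φ_JS(Ȳ, X) for every Y ≠ Ȳ with ‖Y − Ȳ‖ < ε, and φ_JS(Ȳ, X) = (1/4)·log(1/3) + (1/2)·log(2/3) is strictly greater than the global minimum value −log 2. -/

import Mathlib

open scoped BigOperators

/-- The JS-GAN loss. -/
noncomputable def phiJS {d n : ℕ} (x Y : Fin n → EuclideanSpace ℝ (Fin d)) : ℝ :=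
  sSup {s : ℝ | ∃ D : EuclideanSpace ℝ (Fin d) → ℝ, Continuous D ∧
    (∀ u, D u ∈ Set.Ioo (0 : ℝ) 1) ∧
    s = (1 / (2 * (n : ℝ))) * ∑ i, (Real.log (D (x i)) + Real.log (1 - D (Y i)))}

/-! At the collapsed point `Y = (x₀, x₀)` the objective is `(log a + 2 log (1 - a) + log b) / 4`
with `a = D x₀`, `b = D x₁`; it is maximised by `a = 1/3` and approaches its supremum
`log (4/27) / 4` only as `b → 1`. Since a continuous discriminator can take any prescribed values
in `(0, 1)` on finitely many points (Tietze), for `Y ≠ (x₀, x₀)` within `dist x₀ x₁` of it, where no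
`Y i` equals `x₁` and some `Y i` differs from `x₀`, the discriminator equal to `1/2` at `x₀`, `4/5`
at `x₁` and `1/5` at the other `Y i` already reaches at least `log (4/25) / 4`. -/

open Real Set

theorem Finset.exists_continuous_forall_mem_eqOn {X : Type*} [TopologicalSpace X]
    [NormalSpace X] [T1Space X] (s : Finset X) {f : X → ℝ} {t : Set ℝ} [t.OrdConnected]
    (hf : ∀ p ∈ s, f p ∈ t) (ht : t.Nonempty) :
    ∃ g : X → ℝ, Continuous g ∧ (∀ u, g u ∈ t) ∧ EqOn g f s := by
  obtain ⟨g, hgt, hgf⟩ := ContinuousMap.exists_restrict_eq_forall_mem_of_closed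
    ⟨fun p : (s : Set X) => f p, continuous_of_discreteTopology⟩
    (fun p => hf p p.2) ht s.finite_toSet.isClosed
  exact ⟨g, g.continuous, hgt, fun p hp => congr($hgf ⟨p, hp⟩)⟩

lemma Real.log_add_two_mul_log_one_sub_le {a : ℝ} (h0 : 0 < a) (h1 : a < 1) :
    log a + 2 * log (1 - a) ≤ log (1 / 3) + 2 * log (2 / 3) := by
  have hprod : ∀ b : ℝ, 0 < b → b < 1 → log b + 2 * log (1 - b) = log (b * (1 - b) ^ 2) :=
    fun b hb0 hb1 => by
      rw [log_mul hb0.ne' (by nlinarith), log_pow]; push_cast; ring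
  rw [hprod a h0 h1, show (2 : ℝ) / 3 = 1 - 1 / 3 by norm_num,
    hprod (1 / 3) (by norm_num) (by norm_num)]
  apply log_le_log (mul_pos h0 (pow_pos (sub_pos.2 h1) 2))
  nlinarith [mul_nonneg (sq_nonneg (3 * a - 1)) (by linarith : (0 : ℝ) ≤ 4 - 3 * a)]

section JSLoss

variable {d n : ℕ} (x Y : Fin n → EuclideanSpace ℝ (Fin d))

noncomputable def jsObjective (D : EuclideanSpace ℝ (Fin d) → ℝ) : ℝ :=
  (1 / (2 * (n : ℝ))) * ∑ i, (log (D (x i)) + log (1 - D (Y i)))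

variable {x Y}

lemma jsObjective_nonpos {D : EuclideanSpace ℝ (Fin d) → ℝ} (hD : ∀ u, D u ∈ Ioo (0 : ℝ) 1) :
    jsObjective x Y D ≤ 0 := by
  refine mul_nonpos_of_nonneg_of_nonpos (by positivity) (Finset.sum_nonpos fun i _ => ?_)
  have hx := hD (x i)
  have hY := hD (Y i)
  linarith [log_nonpos hx.1.le hx.2.le, log_nonpos (sub_nonneg.2 hY.2.le) (sub_le_self 1 hY.1.le)]

lemma le_phiJS {D : EuclideanSpace ℝ (Fin d) → ℝ} (hc : Continuous D)
    (hD : ∀ u, D u ∈ Ioo (0 : ℝ) 1) : jsObjective x Y D ≤ phiJS x Y := by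
  refine le_csSup ⟨0, ?_⟩ ⟨D, hc, hD, rfl⟩
  rintro _ ⟨D', -, hD', rfl⟩
  exact jsObjective_nonpos hD'

lemma jsObjective_const_half (hn : n ≠ 0) : jsObjective x Y (fun _ => 1 / 2) = -log 2 := by
  rw [jsObjective, Finset.sum_const, Finset.card_univ, Fintype.card_fin,
    show (1 : ℝ) - 1 / 2 = 1 / 2 by norm_num, one_div 2, log_inv, nsmul_eq_mul]
  field_simp
  ring

lemma phiJS_le {c : ℝ} (h : ∀ D, Continuous D → (∀ u, D u ∈ Ioo (0 : ℝ) 1) →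
    jsObjective x Y D ≤ c) : phiJS x Y ≤ c := by
  refine csSup_le ⟨_, fun _ => 1 / 2, continuous_const, fun _ => by norm_num, rfl⟩ ?_
  rintro _ ⟨D, hc, hD, rfl⟩
  exact h D hc hD

lemma neg_log_two_le_phiJS (hn : n ≠ 0) : -log 2 ≤ phiJS x Y :=
  jsObjective_const_half hn ▸ le_phiJS continuous_const fun _ => by norm_num

end JSLoss

lemma mode_collapse_value_eq :
    (1 / 4) * log (1 / 3) + (1 / 2) * log (2 / 3) = log (4 / 27) / 4 := by
  rw [show (4 : ℝ) / 27 = 1 / 3 * (2 / 3) ^ 2 by norm_num, log_mul (by norm_num) (by norm_num),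
    log_pow]
  push_cast
  ring

lemma neg_log_two_lt_mode_collapse_value :
    -log 2 < (1 / 4) * log (1 / 3) + (1 / 2) * log (2 / 3) := by
  have := log_lt_log (by norm_num) (show ((2 : ℝ) ^ 4)⁻¹ < 4 / 27 by norm_num)
  rw [log_inv, log_pow] at this
  push_cast at this
  linarith [mode_collapse_value_eq]

lemma mode_collapse_value_lt :
    (1 / 4) * log (1 / 3) + (1 / 2) * log (2 / 3) < (log (1 / 2) + log (4 / 5)) / 2 := by
  rw [mode_collapse_value_eq, ← log_mul (by norm_num) (by norm_num)]
  have := log_lt_log (by norm_num) (show (4 / 27 : ℝ) < (1 / 2 * (4 / 5)) ^ 2 by norm_num)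
  rw [log_pow] at this
  push_cast at this
  linarith

section TwoSamples

variable {d : ℕ} {x : Fin 2 → EuclideanSpace ℝ (Fin d)}

lemma jsObjective_fin_two (Y : Fin 2 → EuclideanSpace ℝ (Fin d))
    (D : EuclideanSpace ℝ (Fin d) → ℝ) :
    jsObjective x Y D =
      (log (D (x 0)) + log (1 - D (Y 0)) + (log (D (x 1)) + log (1 - D (Y 1)))) / 4 := by
  rw [jsObjective, Fin.sum_univ_two]
  norm_num
  ring

lemma phiJS_mode_collapse (hx : x 0 ≠ x 1) :
    phiJS x (fun _ => x 0) = (1 / 4) * log (1 / 3) + (1 / 2) * log (2 / 3) := by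
  apply le_antisymm
  · refine phiJS_le fun D _ hD => ?_
    rw [jsObjective_fin_two]
    linarith [log_add_two_mul_log_one_sub_le (hD (x 0)).1 (hD (x 0)).2,
      log_nonpos (hD (x 1)).1.le (hD (x 1)).2.le]
  · refine le_of_forall_pos_le_add fun ε hε => ?_
    obtain ⟨D, hc, hD, hDf⟩ := Finset.exists_continuous_forall_mem_eqOn {x 0, x 1}
      (f := fun u => if u = x 0 then 1 / 3 else exp (-(4 * ε))) (t := Ioo 0 1)
      (by norm_num [Ne.symm hx, exp_pos, hε]) (nonempty_Ioo.2 one_pos)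
    have hD0 : D (x 0) = 1 / 3 := by simpa using hDf (by simp : x 0 ∈ _)
    have hD1 : D (x 1) = exp (-(4 * ε)) := by simpa [hx.symm] using hDf (by simp : x 1 ∈ _)
    calc (1 / 4) * log (1 / 3) + (1 / 2) * log (2 / 3)
          = jsObjective x (fun _ => x 0) D + ε := by
          rw [jsObjective_fin_two, hD0, hD1, log_exp]
          norm_num
          ring
      _ ≤ phiJS x (fun _ => x 0) + ε := by grw [le_phiJS hc hD]

lemma lt_phiJS_of_ne_mode_collapse (hx : x 0 ≠ x 1) {Y : Fin 2 → EuclideanSpace ℝ (Fin d)}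
    (hY1 : ∀ i, Y i ≠ x 1) (hY0 : ∃ i, Y i ≠ x 0) :
    (1 / 4) * log (1 / 3) + (1 / 2) * log (2 / 3) < phiJS x Y := by
  obtain ⟨D, hc, hD, hDf⟩ := Finset.exists_continuous_forall_mem_eqOn {x 0, x 1, Y 0, Y 1}
    (f := fun u => if u = x 0 then 1 / 2 else if u = x 1 then 4 / 5 else 1 / 5) (t := Ioo 0 1)
    (fun _ _ => by split_ifs <;> norm_num) (nonempty_Ioo.2 one_pos)
  have hD0 : D (x 0) = 1 / 2 := by simpa using hDf (by simp : x 0 ∈ _)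
  have hD1 : D (x 1) = 4 / 5 := by simpa [Ne.symm hx] using hDf (by simp : x 1 ∈ _)
  have hDY : ∀ i, log (1 - D (Y i)) = if Y i = x 0 then log (1 / 2) else log (4 / 5) := by
    intro i
    have hi : Y i ∈ ({x 0, x 1, Y 0, Y 1} : Finset _) := by fin_cases i <;> simp
    simp only [hDf hi, hY1 i, if_false]
    split_ifs <;> norm_num
  calc (1 / 4) * log (1 / 3) + (1 / 2) * log (2 / 3) < (log (1 / 2) + log (4 / 5)) / 2 :=
        mode_collapse_value_lt
    _ ≤ jsObjective x Y D := by
        have := log_le_log (by norm_num) (show (1 / 2 : ℝ) ≤ 4 / 5 by norm_num)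
        rw [jsObjective_fin_two, hD0, hD1, hDY 0, hDY 1]
        rcases Fin.exists_fin_two.mp hY0 with hi | hi <;> simp only [hi, if_false] <;>
          split_ifs <;> linarith
    _ ≤ phiJS x Y := le_phiJS hc hD

end TwoSamples

theorem stmt7_general {d : ℕ}
    (x : Fin 2 → EuclideanSpace ℝ (Fin d)) (hx : x 0 ≠ x 1) :
    (∀ Y : Fin 2 → EuclideanSpace ℝ (Fin d), -Real.log 2 ≤ phiJS x Y) ∧
    phiJS x (fun _ => x 0)
      = (1 / 4) * Real.log (1 / 3) + (1 / 2) * Real.log (2 / 3) ∧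
    -Real.log 2 < phiJS x (fun _ => x 0) ∧
    ∃ ε > 0, ∀ Y : Fin 2 → EuclideanSpace ℝ (Fin d),
      Y ≠ (fun _ => x 0) → dist Y (fun _ => x 0) < ε →
      phiJS x (fun _ => x 0) < phiJS x Y := by
  rw [phiJS_mode_collapse hx]
  refine ⟨fun Y => neg_log_two_le_phiJS two_ne_zero, rfl, neg_log_two_lt_mode_collapse_value,
    dist (x 0) (x 1), dist_pos.2 hx, fun Y hY hYx => lt_phiJS_of_ne_mode_collapse hx ?_ ?_⟩
  · intro i hi
    have : dist (Y i) (x 0) < dist (x 0) (x 1) :=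
      (dist_le_pi_dist Y (fun _ => x 0) i).trans_lt hYx
    rw [hi, dist_comm] at this
    exact this.false
  · by_contra! h
    exact hY (funext h)

theorem stmt7 {d : ℕ} (hd : 1 ≤ d)
    (x : Fin 2 → EuclideanSpace ℝ (Fin d)) (hx : x 0 ≠ x 1) :
    (∀ Y : Fin 2 → EuclideanSpace ℝ (Fin d), -Real.log 2 ≤ phiJS x Y) ∧
    phiJS x (fun _ => x 0)
      = (1 / 4) * Real.log (1 / 3) + (1 / 2) * Real.log (2 / 3) ∧
    -Real.log 2 < phiJS x (fun _ => x 0) ∧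
    ∃ ε > 0, ∀ Y : Fin 2 → EuclideanSpace ℝ (Fin d),
      Y ≠ (fun _ => x 0) → dist Y (fun _ => x 0) < ε →
      phiJS x (fun _ => x 0) < phiJS x Y :=
  stmt7_general x hx
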